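/- arXiv:2003.05535 — 4 statements merged into one kernel-verified Lean document; each statement's English description precedes it below -/
import Mathlib

section
/- Let f : D → H ⊆ Ĉ be a conformal map from the unit disc onto a simply connected domain H, and let z ∈ ∂H be a boundary point. Then the set of points ζ ∈ ∂D at which f has radial limit equal to z has one-dimensional Lebesgue measure (arc-length measure) zero. -/
/-!
Since `H` is open and `z ∉ H`, the function `f - z` has a holomorphic logarithm `L` on the disc,
and `L` is injective because `exp ∘ L = f - z` is. If `L` covers the disc of radius `δ` around
`L 0`, it therefore misses the disc of radius `δ` around `c = L 0 + 2πi`, so `log ‖L - c‖` is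
harmonic and bounded below by `log δ`. Its integrals over the circles `|w| = r` all equal
`2π log ‖L 0 - c‖`, so by Fatou's lemma, for almost every angle it does not tend to `∞` along
the radius. But at an angle where `f → z` radially, `Re L = log ‖f - z‖ → -∞`, hence
`log ‖L - c‖ → ∞`.
-/

open Set Filter Metric Topology Complex MeasureTheory
open scoped Real

theorem MeasureTheory.ae_not_tendsto_atTop_of_integral_le {α : Type*} [MeasurableSpace α]
    {μ : Measure α} [IsFiniteMeasure μ] {u : ℕ → α → ℝ} {m C : ℝ}
    (hmeas : ∀ n, Measurable (u n)) (hint : ∀ n, Integrable (u n) μ)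
    (hm : ∀ n, ∀ᵐ x ∂μ, m ≤ u n x) (hC : ∀ n, ∫ x, u n x ∂μ ≤ C) :
    ∀ᵐ x ∂μ, ¬ Tendsto (fun n => u n x) atTop atTop := by
  set v : ℕ → α → ENNReal := fun n x => ENNReal.ofReal (u n x - m)
  have hv : ∀ n, Measurable (v n) := fun n => ((hmeas n).sub_const m).ennreal_ofReal
  have hv_int : ∀ n, ∫⁻ x, v n x ∂μ ≤ ENNReal.ofReal (C - m * μ.real univ) := fun n => by
    simp only [v]
    rw [← ofReal_integral_eq_lintegral_ofReal (f := fun x => u n x - m)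
      ((hint n).sub (integrable_const m))
      ((hm n).mono fun x hx => sub_nonneg.2 hx), integral_sub (hint n) (integrable_const m),
      integral_const, smul_eq_mul, mul_comm]
    exact ENNReal.ofReal_le_ofReal (by linarith [hC n])
  have hfatou : ∫⁻ x, liminf (fun n => v n x) atTop ∂μ ≠ ⊤ :=
    ((lintegral_liminf_le hv).trans_lt ((liminf_le_of_frequently_le'
      (Frequently.of_forall hv_int)).trans_lt ENNReal.ofReal_lt_top)).ne
  filter_upwards [ae_lt_top (Measurable.liminf hv) hfatou] with x hx htop
  have hv_top : Tendsto (fun n => v n x) atTop (𝓝 ⊤) :=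
    ENNReal.tendsto_ofReal_atTop.comp (tendsto_atTop_add_const_right _ (-m) htop)
  exact hx.ne hv_top.liminf_eq

theorem MeasureTheory.ae_of_forall_ae_restrict_Ioc_add {μ : Measure ℝ} {p : ℝ} (hp : 0 < p)
    {P : ℝ → Prop} (h : ∀ t, ∀ᵐ x ∂μ.restrict (Ioc t (t + p)), P x) : ∀ᵐ x ∂μ, P x := by
  have hall : ∀ᵐ x ∂μ, ∀ n : ℤ, x ∈ Ioc (n • p) (n • p + p) → P x :=
    ae_all_iff.2 fun n => (ae_restrict_iff' measurableSet_Ioc).1 (h (n • p))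
  filter_upwards [hall] with x hx
  obtain ⟨n, hn⟩ := mem_iUnion.1 ((iUnion_Ioc_add_zsmul hp 0).symm ▸ mem_univ x)
  exact hx n (by simpa [add_smul] using hn)

theorem Complex.exists_exp_eq_of_differentiableOn_ball {g : ℂ → ℂ} {c : ℂ} {r : ℝ}
    (hg : DifferentiableOn ℂ g (ball c r)) (hg0 : ∀ w ∈ ball c r, g w ≠ 0) :
    ∃ L : ℂ → ℂ, DifferentiableOn ℂ L (ball c r) ∧ ∀ w ∈ ball c r, cexp (L w) = g w := by
  rcases le_or_gt r 0 with hr | hr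
  · exact ⟨0, by simp [ball_eq_empty.2 hr]⟩
  have hball : IsOpen (ball c r) := isOpen_ball
  have hg' : DifferentiableOn ℂ (deriv g) (ball c r) :=
    (hg.analyticOnNhd hball).deriv.differentiableOn
  obtain ⟨L, hLc, hL⟩ := ((hg'.div hg hg0).isExactOn_ball).with_val_at c (log (g c))
  refine ⟨L, fun w hw => (hL w hw).differentiableAt.differentiableWithinAt, ?_⟩
  -- `g * cexp (-L)` has derivative zero, hence is constant, equal to its value `1` at `c`.
  have hderiv : ∀ w ∈ ball c r, HasDerivAt (fun w => g w * cexp (-L w)) 0 w := fun w hw => by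
    have hexp : HasDerivAt (fun w => cexp (-L w)) (cexp (-L w) * -(deriv g w / g w)) w :=
      (hL w hw).neg.cexp
    refine (((hg.differentiableAt (hball.mem_nhds hw)).hasDerivAt).mul hexp).congr_deriv ?_
    field_simp [hg0 w hw]
    ring
  intro w hw
  have hc := hg0 c (mem_ball_self hr)
  have := hball.is_const_of_deriv_eq_zero (convex_ball c r).isPreconnected
    (fun w hw => (hderiv w hw).differentiableAt.differentiableWithinAt)
    (fun w hw => (hderiv w hw).deriv) hw (mem_ball_self hr)
  simp only [hLc, exp_neg, exp_log hc, mul_inv_cancel₀ hc] at this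
  exact ((mul_inv_eq_one₀ (exp_ne_zero _)).1 this).symm

theorem DifferentiableOn.isOpen_image_of_injOn {g : ℂ → ℂ} {U : Set ℂ}
    (hg : DifferentiableOn ℂ g U) (hU : IsOpen U) (hUc : IsPreconnected U) (hinj : InjOn g U) :
    IsOpen (g '' U) := by
  rcases (hg.analyticOnNhd hU).is_constant_or_isOpen hUc with ⟨w, hw⟩ | hopen
  · have hsub : U.Subsingleton := fun a ha b hb => hinj ha hb (by rw [hw a ha, hw b hb])
    rcases hsub.eq_empty_or_singleton with rfl | ⟨a, rfl⟩
    · simp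
    · exact absurd hU (not_isOpen_singleton a)
  · exact hopen U subset_rfl hU

theorem DifferentiableOn.exists_pos_le_norm_sub_add_two_pi_I {L : ℂ → ℂ} {U : Set ℂ}
    (hL : DifferentiableOn ℂ L U) (hU : IsOpen U) (hUc : IsPreconnected U)
    (hinj : InjOn (fun w => cexp (L w)) U) {w₀ : ℂ} (hw₀ : w₀ ∈ U) :
    ∃ δ > 0, ∀ w ∈ U, δ ≤ ‖L w - (L w₀ + 2 * π * I)‖ := by
  have hLinj : InjOn L U := fun a ha b hb hab => hinj ha hb (by simp only [hab])
  obtain ⟨δ, hδ, hball⟩ := Metric.isOpen_iff.1 (hL.isOpen_image_of_injOn hU hUc hLinj) (L w₀)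
    (mem_image_of_mem L hw₀)
  refine ⟨δ, hδ, fun w hw => not_lt.1 fun hlt => ?_⟩
  obtain ⟨b, hb, hLb⟩ := hball (show L w - 2 * π * I ∈ ball (L w₀) δ by
    rwa [mem_ball, dist_eq_norm, sub_sub, add_comm (2 * π * I)])
  have hbw : b = w := hinj hb hw (by simp only [hLb, Complex.exp_sub, exp_two_pi_mul_I, div_one])
  rw [hbw, eq_sub_iff_add_eq, add_eq_left] at hLb
  exact two_pi_I_ne_zero hLb

theorem Complex.tendsto_norm_sub_atTop_of_tendsto_exp {ι : Type*} {l : Filter ι} {L : ι → ℂ}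
    (h : Tendsto (fun i => cexp (L i)) l (𝓝 0)) (c : ℂ) :
    Tendsto (fun i => ‖L i - c‖) l atTop := by
  refine tendsto_atTop_mono (fun i => ?_) (tendsto_atTop_add_const_right _ c.re
    (tendsto_neg_atBot_atTop.comp (tendsto_exp_nhds_zero_iff.1 h)))
  have := abs_re_le_norm (L i - c)
  simp only [Function.comp_apply, sub_re] at this ⊢
  linarith [neg_abs_le ((L i).re - c.re)]

theorem AnalyticOnNhd.integral_Ioc_log_norm_circleMap {g : ℂ → ℂ} {c : ℂ} {r : ℝ}
    (hg : AnalyticOnNhd ℂ g (closedBall c |r|)) (hg0 : ∀ w ∈ closedBall c |r|, g w ≠ 0) (t : ℝ) :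
    ∫ θ in Ioc t (t + 2 * π), Real.log ‖g (circleMap c r θ)‖ = 2 * π * Real.log ‖g c‖ := by
  have hperiodic : Function.Periodic (fun θ => Real.log ‖g (circleMap c r θ)‖) (2 * π) :=
    fun θ => by simp only [periodic_circleMap c r θ]
  rw [← intervalIntegral.integral_of_le (by linarith [Real.pi_pos]),
    hperiodic.intervalIntegral_add_eq t 0, zero_add,
    ← hg.circleAverage_log_norm_of_ne_zero hg0, Real.circleAverage, smul_eq_mul,
    mul_inv_cancel_left₀ Real.two_pi_pos.ne']

theorem DifferentiableOn.ae_not_tendsto_norm_radial_atTop {g : ℂ → ℂ}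
    (hg : DifferentiableOn ℂ g (ball 0 1)) {δ : ℝ} (hδ : 0 < δ)
    (hgδ : ∀ w ∈ ball (0 : ℂ) 1, δ ≤ ‖g w‖) :
    ∀ᵐ θ : ℝ, ¬ Tendsto (fun r : ℝ => ‖g (r * cexp (θ * I))‖) (𝓝[<] 1) atTop := by
  obtain ⟨ρ, -, hρ, hρ1⟩ := exists_seq_strictMono_tendsto' (zero_lt_one' ℝ)
  have hdisc : ∀ n, closedBall (0 : ℂ) |ρ n| ⊆ ball 0 1 := fun n =>
    closedBall_subset_ball (by simpa [abs_of_pos (hρ n).1] using (hρ n).2)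
  have hcircle : ∀ n θ, circleMap 0 (ρ n) θ ∈ ball (0 : ℂ) 1 := fun n θ =>
    hdisc n (sphere_subset_closedBall (circleMap_mem_sphere' 0 (ρ n) θ))
  have hg0 : ∀ w ∈ ball (0 : ℂ) 1, g w ≠ 0 := fun w hw => norm_pos_iff.1 (hδ.trans_le (hgδ w hw))
  set u : ℕ → ℝ → ℝ := fun n θ => Real.log ‖g (circleMap 0 (ρ n) θ)‖
  have hu : ∀ n, Continuous (u n) := fun n =>
    (hg.continuousOn.comp_continuous (continuous_circleMap 0 (ρ n)) (hcircle n)).norm.log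
      fun θ => norm_ne_zero_iff.2 (hg0 _ (hcircle n θ))
  have hmean : ∀ n t, ∫ θ in Ioc t (t + 2 * π), u n θ = 2 * π * Real.log ‖g 0‖ := fun n t =>
    ((hg.analyticOnNhd isOpen_ball).mono (hdisc n)).integral_Ioc_log_norm_circleMap
      (fun w hw => hg0 w (hdisc n hw)) t
  have hfatou : ∀ t, ∀ᵐ θ ∂volume.restrict (Ioc t (t + 2 * π)),
      ¬ Tendsto (fun n => u n θ) atTop atTop := fun t =>
    ae_not_tendsto_atTop_of_integral_le (fun n => (hu n).measurable)
      (fun n => (hu n).integrableOn_Ioc)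
      (fun n => ae_of_all _ fun θ => Real.log_le_log hδ (hgδ _ (hcircle n θ)))
      (fun n => (hmean n t).le)
  have hρ1' : Tendsto ρ atTop (𝓝[<] 1) :=
    tendsto_nhdsWithin_iff.2 ⟨hρ1, .of_forall fun n => (hρ n).2⟩
  filter_upwards [ae_of_forall_ae_restrict_Ioc_add Real.two_pi_pos hfatou] with θ hθ htop
  refine hθ (Real.tendsto_log_atTop.comp ?_)
  have := htop.comp hρ1'
  simp only [Function.comp_def, ← circleMap_zero] at this
  exact this

/-- If `f` is a conformal map of the unit disc onto a domain `H` and `z ∈ ∂H`,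
then the set of boundary points (angles) at which `f` has radial limit `z`
has one-dimensional Lebesgue (arc-length) measure zero. -/
theorem stmt_0 (f : ℂ → ℂ) (H : Set ℂ)
    (hf : DifferentiableOn ℂ f (Metric.ball 0 1))
    (hinj : Set.InjOn f (Metric.ball 0 1))
    (hH : H = f '' Metric.ball 0 1)
    (z : ℂ) (hz : z ∈ frontier H) :
    MeasureTheory.volume {θ : ℝ |
      Tendsto (fun r : ℝ => f (r * Complex.exp (θ * Complex.I)))
        (𝓝[<] (1 : ℝ)) (𝓝 z)} = 0 := by
  have hconn : IsPreconnected (ball (0 : ℂ) 1) := (convex_ball 0 1).isPreconnected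
  have hzH : z ∉ H := fun hzH => hz.2 <| by
    rwa [(hH ▸ hf.isOpen_image_of_injOn isOpen_ball hconn hinj : IsOpen H).interior_eq]
  obtain ⟨L, hL, hexpL⟩ := exists_exp_eq_of_differentiableOn_ball (hf.sub_const z)
    fun w hw => sub_ne_zero.2 fun hfw => hzH (hH ▸ ⟨w, hw, hfw⟩)
  obtain ⟨δ, hδ, hLδ⟩ := hL.exists_pos_le_norm_sub_add_two_pi_I isOpen_ball hconn
    (fun a ha b hb hab => hinj ha hb (by simpa [hexpL a ha, hexpL b hb] using hab))
    (mem_ball_self one_pos)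
  rw [measure_eq_zero_iff_ae_notMem]
  filter_upwards [(hL.sub_const _).ae_not_tendsto_norm_radial_atTop hδ hLδ] with θ hθ hE
  refine hθ (tendsto_norm_sub_atTop_of_tendsto_exp ?_ _)
  have hball : ∀ᶠ r : ℝ in 𝓝[<] 1, (r : ℂ) * cexp (θ * I) ∈ ball (0 : ℂ) 1 :=
    Eventually.mono (Ioo_mem_nhdsLT (by norm_num : (-1 : ℝ) < 1)) fun r hr => by
      simpa [abs_lt] using hr
  simpa using (hE.sub_const z).congr' (hball.mono fun r hr => (hexpL _ hr).symm)
end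

section
/- Let f : ℍ → D ⊆ ℂ be a conformal map defined on the upper half-plane, and let A ⊆ ℍ be a bounded set with dist(A, ℝ) > 0. Then for every ε > 0 there exists δ > 0 such that |f(z₁ + ih) − f(z₂ + ih)| ≥ (1 − ε)|f(z₁) − f(z₂)| for all z₁, z₂ ∈ A and all h ∈ [0, δ]. -/
open Set Filter Metric Topology

noncomputable section

/-- The open upper half-plane. -/
def UH : Set ℂ := {z | 0 < z.im}


lemma deriv_ne_zero_of_injOn {f : ℂ → ℂ} {U : Set ℂ} (hU : IsOpen U)
    (hf : DifferentiableOn ℂ f U) (hinj : Set.InjOn f U) {z₀ : ℂ} (hz₀ : z₀ ∈ U) :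
    deriv f z₀ ≠ 0 := by
  intro h0
  have hfa : AnalyticOnNhd ℂ f U := hf.analyticOnNhd hU
  obtain ⟨r, hr0, hrU⟩ := Metric.isOpen_iff.mp hU z₀ hz₀
  -- being constant on a ball contradicts injectivity
  have hnconst : ∀ ρ > (0:ℝ), ball z₀ ρ ⊆ U → ¬ (∀ x ∈ ball z₀ ρ, ∀ y ∈ ball z₀ ρ, f y = f x) := by
    intro ρ hρ hsub hmvt
    have h1 : z₀ + ((ρ/2 : ℝ) : ℂ) ∈ ball z₀ ρ := by
      simp only [mem_ball, dist_eq_norm, add_sub_cancel_left, Complex.norm_real,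
        Real.norm_eq_abs, abs_of_pos (by linarith : (0:ℝ) < ρ/2)]
      linarith
    have h2 := hinj (hsub h1) (hsub (mem_ball_self hρ)) (hmvt _ (mem_ball_self hρ) _ h1)
    have h3 : ((ρ/2 : ℝ) : ℂ) = 0 := by linear_combination h2
    have : (ρ/2 : ℝ) = 0 := by exact_mod_cast h3
    linarith
  have hconst : ∀ ρ > (0:ℝ), ball z₀ ρ ⊆ U → ¬ (∀ z ∈ ball z₀ ρ, deriv f z = 0) := by
    intro ρ hρ hsub hall
    refine hnconst ρ hρ hsub (fun x hx y hy => ?_)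
    have := (convex_ball z₀ ρ).norm_image_sub_le_of_norm_hasDerivWithin_le
      (f' := deriv f) (C := 0)
      (fun w hw => ((hf.differentiableAt (hU.mem_nhds (hsub hw))).hasDerivAt).hasDerivWithinAt)
      (fun w hw => by simp [hall w hw]) hx hy
    have h' : ‖f y - f x‖ ≤ 0 := by simpa using this
    have := le_antisymm h' (norm_nonneg _)
    rwa [norm_eq_zero, sub_eq_zero] at this
  rcases (hfa.deriv z₀ hz₀).eventually_eq_zero_or_eventually_ne_zero with hev | hev
  · obtain ⟨ε, hε, hball⟩ := Metric.eventually_nhds_iff_ball.mp hev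
    have hρ : 0 < min ε r := lt_min hε hr0
    exact hconst _ hρ
      (fun z hz => hrU (mem_ball.mpr ((mem_ball.mp hz).trans_le (min_le_right _ _))))
      (fun z hz => hball z (mem_ball.mpr ((mem_ball.mp hz).trans_le (min_le_left _ _))))
  · rw [eventually_nhdsWithin_iff] at hev
    obtain ⟨ε, hε, hball⟩ := Metric.eventually_nhds_iff_ball.mp hev
    set ρ := min ε r with hρdef
    have hρ : 0 < ρ := lt_min hε hr0
    set B := ball z₀ ρ with hBdef
    have hBU : B ⊆ U := fun z hz => hrU (mem_ball.mpr ((mem_ball.mp hz).trans_le (min_le_right _ _)))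
    have hder : ∀ z ∈ B, z ≠ z₀ → deriv f z ≠ 0 := fun z hz hne =>
      hball z (mem_ball.mpr ((mem_ball.mp hz).trans_le (min_le_left _ _))) hne
    have hinjB : Set.InjOn f B := hinj.mono hBU
    have hz₀B : z₀ ∈ B := mem_ball_self hρ
    have hopen : ∀ s ⊆ B, IsOpen s → IsOpen (f '' s) := by
      have hfaB : AnalyticOnNhd ℂ f B := fun z hz => hfa z (hBU hz)
      rcases hfaB.is_constant_or_isOpen (convex_ball z₀ ρ).isPreconnected with ⟨w, hw⟩ | h
      · exact absurd (fun x hx y hy => (hw y hy).trans (hw x hx).symm) (hnconst ρ hρ hBU)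
      · exact h
    set V := f '' B with hVdef
    have hVopen : IsOpen V := hopen B Subset.rfl isOpen_ball
    have hw₀V : f z₀ ∈ V := mem_image_of_mem f hz₀B
    set g := Function.invFunOn f B with hgdef
    have hgf : ∀ z ∈ B, g (f z) = z := fun z hz => hinjB.leftInvOn_invFunOn hz
    have hfg : ∀ w ∈ V, f (g w) = w := fun w hw => Function.invFunOn_eq (by
      obtain ⟨z, hz, rfl⟩ := hw; exact ⟨z, hz, rfl⟩)
    have hgmem : ∀ w ∈ V, g w ∈ B := fun w hw => Function.invFunOn_mem (by
      obtain ⟨z, hz, rfl⟩ := hw; exact ⟨z, hz, rfl⟩)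
    -- continuity of g on V
    have hcont : ContinuousOn g V := by
      rw [_root_.continuousOn_iff']
      intro t ht
      refine ⟨f '' (B ∩ t), hopen _ inter_subset_left (isOpen_ball.inter ht), ?_⟩
      ext w
      constructor
      · rintro ⟨hgt, hwV⟩
        obtain ⟨z, hz, rfl⟩ := hwV
        rw [mem_preimage, hgf z hz] at hgt
        exact ⟨mem_image_of_mem f ⟨hz, hgt⟩, mem_image_of_mem f hz⟩
      · rintro ⟨⟨z, ⟨hzB, hzt⟩, rfl⟩, hwV⟩
        exact ⟨by rw [mem_preimage, hgf z hzB]; exact hzt, hwV⟩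
    -- differentiability of g away from f z₀
    have hdiff : DifferentiableOn ℂ g (V \ {f z₀}) := by
      rintro w ⟨hwV, hwne⟩
      obtain ⟨z, hzB, rfl⟩ := hwV
      have hzne : z ≠ z₀ := fun h => (by rw [h] at hwne; exact hwne rfl)
      have hd0 : deriv f z ≠ 0 := hder z hzB hzne
      obtain ⟨p, hp⟩ := hfa z (hBU hzB)
      have hsd : HasStrictDerivAt f (deriv f z) z := by
        have h' := hp.hasStrictDerivAt
        have he : ((p 1) fun _ => 1) = deriv f z := h'.hasDerivAt.deriv.symm
        rwa [he] at h'
      have hgd : HasStrictDerivAt g (deriv f z)⁻¹ (f z) :=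
        hsd.to_local_left_inverse (hd0) (eventually_of_mem (isOpen_ball.mem_nhds hzB) hgf)
      exact hgd.hasDerivAt.differentiableAt.differentiableWithinAt
    have hdAll : DifferentiableOn ℂ g V :=
      (Complex.differentiableOn_compl_singleton_and_continuousAt_iff
        (hVopen.mem_nhds hw₀V)).mp ⟨hdiff, hcont.continuousAt (hVopen.mem_nhds hw₀V)⟩
    have hgw₀ : DifferentiableAt ℂ g (f z₀) := hdAll.differentiableAt (hVopen.mem_nhds hw₀V)
    have hid : (g ∘ f) =ᶠ[𝓝 z₀] id :=
      eventually_of_mem (isOpen_ball.mem_nhds hz₀B) hgf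
    have h1 : deriv (g ∘ f) z₀ = 1 := by rw [hid.deriv_eq]; exact deriv_id z₀
    have h2 : deriv (g ∘ f) z₀ = 0 := by
      rw [deriv_comp z₀ hgw₀ (hf.differentiableAt (hU.mem_nhds hz₀)), h0, mul_zero]
    rw [h1] at h2
    exact one_ne_zero h2


set_option maxHeartbeats 1000000 in
lemma lower_bound_of_injOn {f : ℂ → ℂ} {U : Set ℂ} (hU : IsOpen U)
    (hf : DifferentiableOn ℂ f U) (hinj : Set.InjOn f U) {K : Set ℂ}
    (hK : IsCompact K) (hKU : K ⊆ U) :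
    ∃ m > (0:ℝ), ∀ z ∈ K, ∀ w ∈ K, m * ‖z - w‖ ≤ ‖f z - f w‖ := by
  rcases K.eq_empty_or_nonempty with rfl | hne
  · exact ⟨1, one_pos, by simp⟩
  have hfa : AnalyticOnNhd ℂ f U := hf.analyticOnNhd hU
  -- for each point of K, a radius where f is (|f'|/2)-expansive
  have hloc : ∀ z₀ ∈ K, ∃ r > (0:ℝ), ball z₀ (2*r) ⊆ U ∧
      ∀ z ∈ ball z₀ (2*r), ∀ w ∈ ball z₀ (2*r),
        (‖deriv f z₀‖/2) * ‖z - w‖ ≤ ‖f z - f w‖ := by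
    intro z₀ hz₀
    have hc : deriv f z₀ ≠ 0 := deriv_ne_zero_of_injOn hU hf hinj (hKU hz₀)
    have hcont : ContinuousAt (deriv f) z₀ := (hfa.deriv z₀ (hKU hz₀)).continuousAt
    have h1 : ∀ᶠ z in 𝓝 z₀, ‖deriv f z - deriv f z₀‖ ≤ ‖deriv f z₀‖/2 := by
      have := hcont.eventually (Metric.closedBall_mem_nhds (deriv f z₀)
        (div_pos (norm_pos_iff.mpr hc) two_pos))
      filter_upwards [this] with z hz
      simpa [dist_eq_norm] using hz
    have h2 : ∀ᶠ z in 𝓝 z₀, z ∈ U := hU.eventually_mem (hKU hz₀)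
    obtain ⟨ε, hε, hball⟩ := Metric.eventually_nhds_iff_ball.mp (h1.and h2)
    refine ⟨ε/2, by positivity, ?_, ?_⟩
    · intro z hz
      exact (hball z (by simpa [mem_ball] using (mem_ball.mp hz).trans_le (by linarith))).2
    · intro z hz w hw
      have hsub : ball z₀ (2*(ε/2)) ⊆ ball z₀ ε := by
        intro x hx; simpa [mem_ball] using (mem_ball.mp hx).trans_le (by linarith)
      have hmvt := (convex_ball z₀ (2*(ε/2))).norm_image_sub_le_of_norm_hasDerivWithin_le
        (f := fun x => f x - deriv f z₀ * x) (f' := fun x => deriv f x - deriv f z₀)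
        (C := ‖deriv f z₀‖/2)
        (fun x hx => by
          have hda : HasDerivAt (fun y => f y - deriv f z₀ * y) (deriv f x - deriv f z₀) x := by
            have := ((hf.differentiableAt
              (hU.mem_nhds ((hball x (hsub hx)).2))).hasDerivAt).sub
              ((hasDerivAt_id x).const_mul (deriv f z₀))
            simp only [id_eq, mul_one] at this; exact this
          exact hda.hasDerivWithinAt)
        (fun x hx => (hball x (hsub hx)).1) hw hz
      have key : ‖(f z - f w) - deriv f z₀ * (z - w)‖ ≤ ‖deriv f z₀‖/2 * ‖z - w‖ := by
        have : (f z - deriv f z₀ * z) - (f w - deriv f z₀ * w)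
            = (f z - f w) - deriv f z₀ * (z - w) := by ring
        rwa [this] at hmvt
      have h3 : ‖deriv f z₀ * (z - w)‖ = ‖deriv f z₀‖ * ‖z - w‖ := norm_mul _ _
      have h4 := norm_sub_norm_le (deriv f z₀ * (z - w)) (deriv f z₀ * (z - w) - (f z - f w))
      have h5 : ‖deriv f z₀ * (z - w) - (deriv f z₀ * (z - w) - (f z - f w))‖ = ‖f z - f w‖ := by
        congr 1; ring
      have h6 : ‖deriv f z₀ * (z - w) - (f z - f w)‖ ≤ ‖deriv f z₀‖/2 * ‖z - w‖ := by
        rw [← norm_neg]; simpa [neg_sub] using key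
      rw [h5, h3] at h4
      nlinarith [norm_nonneg (z - w)]
  choose! r hr0 hrU hrexp using hloc
  -- finite subcover
  obtain ⟨t, htK, htfin, htcover⟩ := hK.elim_finite_subcover_image
    (fun z hz => isOpen_ball) (fun z hz => by
      obtain h := hr0 z hz
      exact mem_biUnion hz (mem_ball_self h))
  have htne : t.Nonempty := by
    obtain ⟨x, hx⟩ := hne
    obtain ⟨i, hi, hxi⟩ := mem_iUnion₂.mp (htcover hx)
    exact ⟨i, hi⟩
  set T := htfin.toFinset with hT
  have hTne : T.Nonempty := by simpa [hT] using htne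
  set ρ := T.inf' hTne r with hρ
  set m₀ := T.inf' hTne (fun z => ‖deriv f z‖/2) with hm₀
  have hρpos : 0 < ρ := by
    rw [hρ, Finset.lt_inf'_iff]
    intro i hi; exact hr0 i (htK (htfin.mem_toFinset.mp hi))
  have hm₀pos : 0 < m₀ := by
    rw [hm₀, Finset.lt_inf'_iff]
    intro i hi
    exact div_pos (norm_pos_iff.mpr
      (deriv_ne_zero_of_injOn hU hf hinj (hKU (htK (htfin.mem_toFinset.mp hi))))) two_pos
  -- near case bound
  have hnear : ∀ z ∈ K, ∀ w ∈ K, ‖z - w‖ < ρ → m₀ * ‖z - w‖ ≤ ‖f z - f w‖ := by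
    intro z hz w hw hd
    obtain ⟨i, hi, hzi⟩ := mem_iUnion₂.mp (htcover hz)
    have hiT : i ∈ T := htfin.mem_toFinset.mpr hi
    have hρi : ρ ≤ r i := Finset.inf'_le _ hiT
    have hm₀i : m₀ ≤ ‖deriv f i‖/2 := Finset.inf'_le _ hiT
    have hz2 : z ∈ ball i (2 * r i) := by
      rw [mem_ball] at hzi ⊢; linarith [hr0 i (htK hi)]
    have hw2 : w ∈ ball i (2 * r i) := by
      rw [mem_ball, dist_eq_norm] at hzi ⊢
      calc ‖w - i‖ ≤ ‖w - z‖ + ‖z - i‖ := norm_sub_le_norm_sub_add_norm_sub w z i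
        _ < ρ + r i := by rw [← norm_neg (w-z), neg_sub] at *; exact add_lt_add hd hzi
        _ ≤ 2 * r i := by linarith
    calc m₀ * ‖z - w‖ ≤ (‖deriv f i‖/2) * ‖z - w‖ :=
          mul_le_mul_of_nonneg_right hm₀i (norm_nonneg _)
      _ ≤ ‖f z - f w‖ := hrexp i (htK hi) z hz2 w hw2
  -- far case bound
  obtain ⟨C, hC⟩ := Metric.isBounded_iff.mp hK.isBounded
  set R := max C 1 with hR
  have hRpos : (0:ℝ) < R := lt_of_lt_of_le one_pos (le_max_right _ _)
  have hdiam : ∀ z ∈ K, ∀ w ∈ K, ‖z - w‖ ≤ R := by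
    intro z hz w hw
    have := hC hz hw
    rw [dist_eq_norm] at this
    exact this.trans (le_max_left _ _)
  set T2 := (K ×ˢ K) ∩ {p : ℂ × ℂ | ρ ≤ dist p.1 p.2} with hT2
  have hT2cpt : IsCompact T2 := (hK.prod hK).inter_right
    (isClosed_le continuous_const (continuous_fst.dist continuous_snd))
  have hfar : ∃ m₁ > (0:ℝ), ∀ z ∈ K, ∀ w ∈ K, ρ ≤ ‖z - w‖ → m₁ * ‖z - w‖ ≤ ‖f z - f w‖ := by
    rcases T2.eq_empty_or_nonempty with hT2e | hT2ne
    · refine ⟨1, one_pos, fun z hz w hw hzw => ?_⟩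
      exfalso
      have hmem : (z, w) ∈ T2 := ⟨⟨hz, hw⟩, by rwa [mem_setOf_eq, dist_eq_norm]⟩
      rw [hT2e] at hmem
      exact notMem_empty _ hmem
    · have hcont2 : ContinuousOn (fun p : ℂ × ℂ => ‖f p.1 - f p.2‖) T2 := by
        have hfc : ContinuousOn f U := hf.continuousOn
        apply ContinuousOn.norm
        apply ContinuousOn.sub
        · exact hfc.comp continuousOn_fst (fun p hp => hKU hp.1.1)
        · exact hfc.comp continuousOn_snd (fun p hp => hKU hp.1.2)
      obtain ⟨p₀, hp₀T, hp₀min⟩ := hT2cpt.exists_isMinOn hT2ne hcont2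
      have hmin : ∀ q ∈ T2, ‖f p₀.1 - f p₀.2‖ ≤ ‖f q.1 - f q.2‖ := fun q hq =>
        isMinOn_iff.mp hp₀min q hq
      have hp₀pos : 0 < ‖f p₀.1 - f p₀.2‖ := by
        rw [norm_pos_iff, sub_ne_zero]
        intro heq
        have heq2 : p₀.1 = p₀.2 := hinj (hKU hp₀T.1.1) (hKU hp₀T.1.2) heq
        have h3 := hp₀T.2
        rw [mem_setOf_eq, heq2, dist_self] at h3
        linarith [hρpos]
      refine ⟨‖f p₀.1 - f p₀.2‖ / R, div_pos hp₀pos hRpos, fun z hz w hw hzw => ?_⟩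
      have hmem : (z, w) ∈ T2 := ⟨⟨hz, hw⟩, by rwa [mem_setOf_eq, dist_eq_norm]⟩
      have h1' := hmin (z, w) hmem
      have h1 : ‖f p₀.1 - f p₀.2‖ ≤ ‖f z - f w‖ := by simpa using h1'
      have h2 : ‖z - w‖ ≤ R := hdiam z hz w hw
      calc ‖f p₀.1 - f p₀.2‖ / R * ‖z - w‖ ≤ ‖f p₀.1 - f p₀.2‖ / R * R :=
            mul_le_mul_of_nonneg_left h2 (by positivity)
        _ = ‖f p₀.1 - f p₀.2‖ := by field_simp
        _ ≤ ‖f z - f w‖ := h1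
  obtain ⟨m₁, hm₁pos, hm₁⟩ := hfar
  refine ⟨min m₀ m₁, lt_min hm₀pos hm₁pos, fun z hz w hw => ?_⟩
  rcases lt_or_ge ‖z - w‖ ρ with hlt | hge
  · exact le_trans (mul_le_mul_of_nonneg_right (min_le_left _ _) (norm_nonneg _))
      (hnear z hz w hw hlt)
  · exact le_trans (mul_le_mul_of_nonneg_right (min_le_right _ _) (norm_nonneg _))
      (hm₁ z hz w hw hge)


lemma isOpen_UH : IsOpen UH := isOpen_lt continuous_const Complex.continuous_im

/-- Let `f : ℍ → D` be a conformal map and `A ⊆ ℍ` a bounded set with positive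
distance from `ℝ`. Then for every `ε > 0` there is `δ > 0` such that
`|f(z₁+ih) − f(z₂+ih)| ≥ (1−ε)|f(z₁) − f(z₂)|` for all `z₁, z₂ ∈ A`, `h ∈ [0,δ]`. -/
theorem stmt_5 (f : ℂ → ℂ) (hf : DifferentiableOn ℂ f UH) (hinj : Set.InjOn f UH)
    (A : Set ℂ) (hA : A ⊆ UH) (hbd : Bornology.IsBounded A)
    (d : ℝ) (hd : 0 < d) (hdist : ∀ z ∈ A, d ≤ z.im) :
    ∀ ε > (0:ℝ), ∃ δ > (0:ℝ), ∀ z₁ ∈ A, ∀ z₂ ∈ A, ∀ h ∈ Set.Icc (0:ℝ) δ,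
      (1 - ε) * ‖f z₁ - f z₂‖ ≤
        ‖f (z₁ + h * Complex.I) - f (z₂ + h * Complex.I)‖ := by
  intro ε hε
  have hfa : AnalyticOnNhd ℂ f UH := hf.analyticOnNhd isOpen_UH
  obtain ⟨R₀, hR₀⟩ := hbd.subset_closedBall 0
  set R := max R₀ d with hRdef
  set S : Set ℂ := closedBall 0 R ∩ {z | d ≤ z.im} with hSdef
  set S' : Set ℂ := closedBall 0 (R+1) ∩ {z | d ≤ z.im} with hS'def
  have hSconv : Convex ℝ S := (convex_closedBall _ _).inter (convex_halfSpace_im_ge d)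
  have hSclosed : IsClosed S := IsClosed.inter Metric.isClosed_closedBall
    (isClosed_le continuous_const Complex.continuous_im)
  have hScpt : IsCompact S := (isCompact_of_isClosed_isBounded hSclosed
    (isBounded_closedBall.subset inter_subset_left))
  have hS'cpt : IsCompact S' := (isCompact_of_isClosed_isBounded
    (IsClosed.inter Metric.isClosed_closedBall
      (isClosed_le continuous_const Complex.continuous_im))
    (isBounded_closedBall.subset inter_subset_left))
  have hSU : S ⊆ UH := fun z hz => lt_of_lt_of_le hd hz.2
  have hS'U : S' ⊆ UH := fun z hz => lt_of_lt_of_le hd hz.2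
  have hAS : A ⊆ S := fun z hz => ⟨(closedBall_subset_closedBall (le_max_left R₀ d)) (hR₀ hz),
    hdist z hz⟩
  obtain ⟨m, hm0, hmS⟩ := lower_bound_of_injOn isOpen_UH hf hinj hScpt hSU
  -- uniform continuity of deriv f on S'
  have hucont : UniformContinuousOn (deriv f) S' :=
    hS'cpt.uniformContinuousOn_of_continuous
      (fun z hz => ((hfa.deriv z (hS'U hz)).continuousAt).continuousWithinAt)
  rw [Metric.uniformContinuousOn_iff] at hucont
  obtain ⟨δ₀, hδ₀, hδ₀uc⟩ := hucont (ε * m) (by positivity)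
  refine ⟨min (δ₀/2) 1, lt_min (by linarith) one_pos, ?_⟩
  intro z₁ hz₁ z₂ hz₂ h hh
  obtain ⟨hh0, hhδ⟩ := hh
  have hhδ₀ : h < δ₀ := lt_of_le_of_lt (hhδ.trans (min_le_left _ _)) (by linarith)
  have hh1 : h ≤ 1 := hhδ.trans (min_le_right _ _)
  -- shifted points stay in S'
  have hshift : ∀ z ∈ S, z + (h : ℂ) * Complex.I ∈ S' := by
    intro z hz
    constructor
    · rw [mem_closedBall, dist_zero_right]
      calc ‖z + (h:ℂ) * Complex.I‖ ≤ ‖z‖ + ‖(h:ℂ) * Complex.I‖ := norm_add_le _ _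
        _ ≤ R + 1 := by
            have h1 : ‖z‖ ≤ R := by simpa [dist_zero_right] using hz.1
            have h2 : ‖(h:ℂ) * Complex.I‖ = h := by
              simp [norm_mul, Complex.norm_real, abs_of_nonneg hh0]
            linarith
    · have him : (z + (h:ℂ) * Complex.I).im = z.im + h := by simp
      have hz2 : d ≤ z.im := hz.2
      rw [mem_setOf_eq, him]
      linarith
  have hSS' : S ⊆ S' := inter_subset_inter (closedBall_subset_closedBall (by linarith)) le_rfl
  -- the perturbation function and its derivative bound
  set g : ℂ → ℂ := fun z => f (z + (h:ℂ) * Complex.I) - f z with hgdef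
  have hgd : ∀ z ∈ S, HasDerivWithinAt g
      (deriv f (z + (h:ℂ) * Complex.I) - deriv f z) S z := by
    intro z hz
    have h1 : HasDerivAt (fun z => f (z + (h:ℂ) * Complex.I))
        (deriv f (z + (h:ℂ) * Complex.I)) z := by
      have hin : z + (h:ℂ) * Complex.I ∈ UH := hS'U (hshift z hz)
      have hfd : HasDerivAt f (deriv f (z + (h:ℂ) * Complex.I)) (z + (h:ℂ) * Complex.I) :=
        (hf.differentiableAt (isOpen_UH.mem_nhds hin)).hasDerivAt
      have := HasDerivAt.comp z hfd ((hasDerivAt_id z).add_const ((h:ℂ) * Complex.I))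
      simp only [Function.comp_def, id_eq, mul_one] at this; exact this
    have h2 : HasDerivAt f (deriv f z) z :=
      (hf.differentiableAt (isOpen_UH.mem_nhds (hSU hz))).hasDerivAt
    exact (h1.sub h2).hasDerivWithinAt
  have hgbound : ∀ z ∈ S, ‖deriv f (z + (h:ℂ) * Complex.I) - deriv f z‖ ≤ ε * m := by
    intro z hz
    have hdist' : dist (z + (h:ℂ) * Complex.I) z < δ₀ := by
      rw [dist_eq_norm, add_sub_cancel_left]
      have : ‖(h:ℂ) * Complex.I‖ = h := by
        simp [norm_mul, Complex.norm_real, abs_of_nonneg hh0]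
      rwa [this]
    have := hδ₀uc _ (hshift z hz) _ (hSS' hz) hdist'
    rw [dist_eq_norm] at this
    exact this.le
  have hmvt := hSconv.norm_image_sub_le_of_norm_hasDerivWithin_le hgd hgbound
    (hAS hz₂) (hAS hz₁)
  -- combine
  have key1 : m * ‖z₁ - z₂‖ ≤ ‖f z₁ - f z₂‖ := hmS z₁ (hAS hz₁) z₂ (hAS hz₂)
  have key2 : ‖g z₁ - g z₂‖ ≤ ε * ‖f z₁ - f z₂‖ := by
    calc ‖g z₁ - g z₂‖ ≤ ε * m * ‖z₁ - z₂‖ := hmvt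
      _ = ε * (m * ‖z₁ - z₂‖) := by ring
      _ ≤ ε * ‖f z₁ - f z₂‖ := mul_le_mul_of_nonneg_left key1 hε.le
  have hsplit : f (z₁ + (h:ℂ) * Complex.I) - f (z₂ + (h:ℂ) * Complex.I)
      = (f z₁ - f z₂) + (g z₁ - g z₂) := by rw [hgdef]; ring
  rw [hsplit]
  have h4 : ‖f z₁ - f z₂‖ - ‖g z₁ - g z₂‖ ≤ ‖(f z₁ - f z₂) + (g z₁ - g z₂)‖ := by
    have := norm_sub_le ((f z₁ - f z₂) + (g z₁ - g z₂)) (g z₁ - g z₂)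
    simpa using this
  nlinarith [norm_nonneg (f z₁ - f z₂)]
end
end

section
/- Let h : D \ {0} extended to h(w) = c(w + 1/w) map the unit disc D conformally onto Ĉ \ I where I = [−2c, 2c] ⊆ ℝ and h(0) = ∞, with c > 0. Then for any p ∈ Ĉ \ I with Im p = s > 0, the hyperbolic distance in Ĉ \ I from p to ∞ is at most arcsinh(2c/s). -/
open Set Filter Metric Topology

/-- Let `h(w) = c(w + 1/w)` map the unit disc conformally onto `Ĉ \ [−2c, 2c]` with
`h(0) = ∞`.  For `p = h(w)` with `Im p = s > 0`, the hyperbolic distance in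
`Ĉ \ [−2c,2c]` from `p` to `∞` (which equals the hyperbolic distance in the disc
from `w` to `0`, i.e. `log((1+|w|)/(1−|w|))`) is at most `arcsinh(2c/s)`. -/
theorem stmt_12 (c : ℝ) (hc : 0 < c) (w : ℂ)
    (hw : w ∈ Metric.ball (0:ℂ) 1) (hw0 : w ≠ 0)
    (s : ℝ) (hs : s = ((c : ℂ) * (w + w⁻¹)).im) (hspos : 0 < s) :
    Real.log ((1 + ‖w‖) / (1 - ‖w‖))
      ≤ Real.arsinh (2 * c / s) := by
  set r := ‖w‖ with hr
  have hr0 : 0 < r := norm_pos_iff.mpr hw0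
  have hr1 : r < 1 := by simpa [hr] using hw
  have hnsq : Complex.normSq w = r ^ 2 := (Complex.sq_norm w).symm
  have him : s * r ^ 2 = c * (w.im * (r ^ 2 - 1)) := by
    rw [hs]
    simp [Complex.add_im, Complex.inv_im, Complex.mul_im, hnsq]
    have hr2 : r ^ 2 ≠ 0 := by positivity
    field_simp
    ring
  have himle : -r ≤ w.im := by
    have := Complex.abs_im_le_norm w
    have := abs_le.mp this
    linarith [this.1]
  have key : s * r ≤ c * (1 - r ^ 2) := by
    have hnp : r ^ 2 - 1 ≤ 0 := by nlinarith
    have h4 := mul_le_mul_of_nonpos_right himle hnp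
    nlinarith [h4]
  have hX : (0:ℝ) < (1 + r) / (1 - r) := by
    apply div_pos <;> linarith
  rw [← Real.arsinh_sinh (Real.log ((1 + r) / (1 - r))), Real.arsinh_le_arsinh,
    Real.sinh_log hX]
  have h1 : ((1 + r) / (1 - r) - ((1 + r) / (1 - r))⁻¹) / 2 = 2 * r / (1 - r ^ 2) := by
    have h2 : (1:ℝ) - r ≠ 0 := by linarith
    have h3 : (1:ℝ) + r ≠ 0 := by linarith
    have h4 : (1:ℝ) - r ^ 2 ≠ 0 := by nlinarith
    field_simp
    ring
  rw [h1]
  rw [div_le_div_iff₀ (by nlinarith) hspos]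
  nlinarith [key, hspos, hc, hr0]
end

section
/- Let K ⊆ closure(ℍ) be a compact ℍ-hull, h > 0, and let S₁, S₂ be two different h-sides of K. Then there exists δ > 0 such that every crosscut C of ℍ \ K that separates some point z₁ ∈ S₁ from ∞ and also some point z₂ ∈ S₂ from ∞ has diameter at least δ. -/
open Set Filter Metric Bornology Topology

noncomputable section

/-- The closed upper half-plane. -/
def clUH : Set ℂ := {z | 0 ≤ z.im}

/-- `fillH A` is `A` together with all bounded connected components of `ℍ \ A`. -/
def fillH (A : Set ℂ) : Set ℂ :=
  A ∪ {z | z ∈ UH \ A ∧ IsBounded (connectedComponentIn (UH \ A) z)}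

/-- A compact `ℍ`-hull: a compact subset of the closed upper half-plane whose complement
in `ℍ` is simply connected. -/
def IsHull (K : Set ℂ) : Prop :=
  IsCompact K ∧ K ⊆ clUH ∧ SimplyConnectedSpace ↥(UH \ K)

/-- The filter of neighbourhoods of `∞` within a set `s ⊆ ℂ`. -/
def atInfty (s : Set ℂ) : Filter ℂ := comap (fun z : ℂ => ‖z‖) atTop ⊓ 𝓟 s

/-- `g` is the mapping-out function of the hull `K`: the conformal bijection from
`ℍ \ K` onto `ℍ` with hydrodynamic normalisation `g z = z + O(1/z)` at `∞`. -/
def IsMapsOut (K : Set ℂ) (g : ℂ → ℂ) : Prop :=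
  DifferentiableOn ℂ g (UH \ K) ∧ InjOn g (UH \ K) ∧ g '' (UH \ K) = UH ∧
    Tendsto (fun z => g z - z) (atInfty (UH \ K)) (𝓝 0)

/-- Harmonicity of a real function on an open set: locally the real part of a
holomorphic function. -/
def HarmOn (v : ℂ → ℝ) (s : Set ℂ) : Prop :=
  ∀ z ∈ s, ∃ r > 0, Metric.ball z r ⊆ s ∧
    ∃ F : ℂ → ℂ, DifferentiableOn ℂ F (Metric.ball z r) ∧
      ∀ w ∈ Metric.ball z r, v w = (F w).re

/-- `c` is the half-plane capacity of the compact set `A ⊆ closure ℍ`: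
`c = lim_{y→∞} y·E[Im B^{iy}_τ]`, expressed via the bounded harmonic function
`v(z) = E^z[Im B_τ]` on `ℍ \ A` with boundary values `Im ζ`. -/
def IsHcap (A : Set ℂ) (c : ℝ) : Prop :=
  ∃ v : ℂ → ℝ, HarmOn v (UH \ A) ∧ (∃ M, ∀ z ∈ UH \ A, |v z| ≤ M) ∧
    (∀ ζ ∈ frontier (UH \ A), Tendsto v (𝓝[UH \ A] ζ) (𝓝 ζ.im)) ∧
    Tendsto (fun y : ℝ => y * v (y * Complex.I)) atTop (𝓝 c)

/-- `C` is a crosscut of the domain `Ω`: an open simple arc in `Ω` whose endpoints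
lie on the boundary of `Ω`. -/
def IsCrosscut (Ω C : Set ℂ) : Prop :=
  ∃ c : ℝ → ℂ, ContinuousOn c (Icc 0 1) ∧ InjOn c (Ioo 0 1) ∧
    C = c '' Ioo 0 1 ∧ C ⊆ Ω ∧ c 0 ∈ frontier Ω ∧ c 1 ∈ frontier Ω

/-- The crosscut `C` of `Ω` separates the set `S` from `∞`. -/
def SeparatesFromInfty (Ω C S : Set ℂ) : Prop :=
  ∀ z ∈ (S ∩ Ω) \ C, IsBounded (connectedComponentIn (Ω \ C) z)

/-- The local growth property of an increasing family of hulls. -/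
def LocalGrowth (K : ℝ → Set ℂ) : Prop :=
  ∀ ε > 0, ∀ T > (0:ℝ), ∃ δ > 0, ∀ t ∈ Icc (0:ℝ) T, ∃ C : Set ℂ,
    IsCrosscut (UH \ K t) C ∧ Metric.diam C ≤ ε ∧
    SeparatesFromInfty (UH \ K t) C (K (t + δ) \ K t)

/-- The hull generated by the trace `γ` at time `t`. -/
def traceHull (γ : ℝ → ℂ) (t : ℝ) : Set ℂ := fillH (γ '' Icc 0 t)

/-- `γ` is a (chordal Loewner) continuous trace. -/
def IsTrace (γ : ℝ → ℂ) : Prop :=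
  ContinuousOn γ (Ici 0) ∧ (γ 0).im = 0 ∧ (∀ t ∈ Ici (0:ℝ), γ t ∈ clUH) ∧
  (∀ t ∈ Ici (0:ℝ), IsHull (traceHull γ t)) ∧
  (∀ s t, 0 ≤ s → s < t → traceHull γ s ⊂ traceHull γ t) ∧
  LocalGrowth (traceHull γ)

/-- `γ` is a trace parametrised by half-plane capacity: `hcap(K_t) = 2t`. -/
def IsTraceHcap (γ : ℝ → ℂ) : Prop :=
  IsTrace γ ∧ ∀ t ≥ (0:ℝ), IsHcap (traceHull γ t) (2 * t)

/-- `ξ` is the driving function of the trace `γ`. -/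
def IsDriverOf (ξ : ℝ → ℝ) (γ : ℝ → ℂ) : Prop :=
  ContinuousOn ξ (Ici 0) ∧ ∀ t s, 0 ≤ t → t < s →
    ∀ g, IsMapsOut (traceHull γ t) g →
      (ξ t : ℂ) ∈ closure (g '' ((traceHull γ s \ traceHull γ t) ∩ (UH \ traceHull γ t)))

/-- The horizontal strip `S_h = {0 < Im z < h}`. -/
def Strip (h : ℝ) : Set ℂ := {z | 0 < z.im ∧ z.im < h}

/-- Two points of `S_h \ K` are on the same `h`-side of `K` if they are connected
in `S_{h'} \ K` for every `h' > h`. -/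
def SameSide (K : Set ℂ) (h : ℝ) (z w : ℂ) : Prop :=
  ∀ h' > h, w ∈ connectedComponentIn (Strip h' \ K) z

/-- An `h`-side of `K`: an equivalence class of `S_h \ K` under `SameSide`. -/
def IsSide (K : Set ℂ) (h : ℝ) (S : Set ℂ) : Prop :=
  ∃ z ∈ Strip h \ K, S = {w ∈ Strip h \ K | SameSide K h z w}

lemma sameSide_congr {K : Set ℂ} {h : ℝ} {z₁ z₂ : ℂ} (hs : SameSide K h z₁ z₂) (w : ℂ) :
    SameSide K h z₁ w ↔ SameSide K h z₂ w := by
  constructor <;> intro hw h' hh'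
  · rw [← connectedComponentIn_eq (hs h' hh')]
    exact hw h' hh'
  · rw [connectedComponentIn_eq (hs h' hh')]
    exact hw h' hh'

/-- Crosscuts of `ℍ \ K` that separate points on two different `h`-sides of `K`
from `∞` have diameter bounded below. -/
theorem stmt_13 (K : Set ℂ) (hK : IsHull K) (h : ℝ) (hh : 0 < h)
    (S₁ S₂ : Set ℂ) (h₁ : IsSide K h S₁) (h₂ : IsSide K h S₂) (hne : S₁ ≠ S₂) :
    ∃ δ > (0:ℝ), ∀ C : Set ℂ, IsCrosscut (UH \ K) C →
      ∀ z₁ ∈ S₁, ∀ z₂ ∈ S₂,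
        z₁ ∉ C → IsBounded (connectedComponentIn ((UH \ K) \ C) z₁) →
        z₂ ∉ C → IsBounded (connectedComponentIn ((UH \ K) \ C) z₂) →
        δ ≤ Metric.diam C := by
  obtain ⟨hKc, hKsub, hKsc⟩ := hK
  obtain ⟨a, ha, rfl⟩ := h₁
  obtain ⟨b, hb, rfl⟩ := h₂
  have hUHopen : IsOpen UH := isOpen_lt continuous_const Complex.continuous_im
  have hΩopen : IsOpen (UH \ K) := hUHopen.sdiff hKc.isClosed
  -- `a` and `b` are not on the same side
  have hnss : ¬ SameSide K h a b := by
    intro hs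
    apply hne
    ext w
    simp only [mem_setOf_eq]
    exact and_congr_right fun _ => sameSide_congr hs w
  have hnss' : ∃ h₀, h₀ > h ∧ b ∉ connectedComponentIn (Strip h₀ \ K) a := by
    by_contra hcon
    push_neg at hcon
    exact hnss fun h' hh' => hcon h' hh'
  obtain ⟨h₀, hh₀, hbQ⟩ := hnss'
  set h1 : ℝ := (h + h₀) / 2 with hh1def
  have hh1gt : h < h1 := by simp only [hh1def]; linarith
  have hh1lt : h1 < h₀ := by simp only [hh1def]; linarith
  -- bound on K
  obtain ⟨r, hr⟩ := hKc.isBounded.subset_closedBall (0 : ℂ)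
  set R : ℝ := max r 0 with hRdef
  have hKim : ∀ p ∈ K, p.im ≤ R := by
    intro p hp
    have h1' : ‖p‖ ≤ r := by
      have := hr hp
      rwa [mem_closedBall, Complex.dist_eq, sub_zero] at this
    have h2' : p.im ≤ ‖p‖ := le_trans (le_abs_self _) (Complex.abs_im_le_norm p)
    exact le_trans (le_trans h2' h1') (le_max_left _ _)
  set M : ℝ := max R h₀ + 1 with hMdef
  have hMpos : (0:ℝ) < M - 1 := by
    have : h₀ ≤ max R h₀ := le_max_right _ _
    simp only [hMdef]; nlinarith
  set Top : Set ℂ := {z : ℂ | M < z.im} with hTopdef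
  have hTopΩ : Top ⊆ UH \ K := by
    intro z hz
    have hzim : M < z.im := hz
    constructor
    · show 0 < z.im; nlinarith
    · intro hzK
      have := hKim z hzK
      have : R ≤ max R h₀ := le_max_left _ _
      simp only [hMdef] at hzim
      nlinarith [hKim z hzK]
  have hTopconn : IsPreconnected Top := (convex_halfSpace_im_gt M).isPreconnected
  have hTopunb : ¬ IsBounded Top := by
    intro hbdd
    obtain ⟨t, ht⟩ := hbdd.subset_closedBall (0 : ℂ)
    set p : ℂ := ((max t 0 + M + 1 : ℝ) : ℂ) * Complex.I with hpdef
    have hpim : p.im = max t 0 + M + 1 := by simp [hpdef]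
    have hpTop : p ∈ Top := by
      show M < p.im
      rw [hpim]
      have : (0:ℝ) ≤ max t 0 := le_max_right _ _
      linarith
    have h1' : ‖p‖ ≤ t := by
      have := ht hpTop
      rwa [mem_closedBall, Complex.dist_eq, sub_zero] at this
    have h2' : p.im ≤ ‖p‖ := le_trans (le_abs_self _) (Complex.abs_im_le_norm p)
    have : t ≤ max t 0 := le_max_left _ _
    rw [hpim] at h2'
    nlinarith
  -- path-connectivity of the complement
  haveI : SimplyConnectedSpace ↥(UH \ K) := hKsc
  have hpc : IsPathConnected (UH \ K) := isPathConnected_iff_pathConnectedSpace.2 inferInstance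
  set w₀ : ℂ := ((M + 1 : ℝ) : ℂ) * Complex.I with hw₀def
  have hw₀Top : w₀ ∈ Top := by
    show M < w₀.im
    simp [hw₀def]
  have hw₀Ω : w₀ ∈ UH \ K := hTopΩ hw₀Top
  have hStripΩ : ∀ h' : ℝ, Strip h' \ K ⊆ UH \ K := by
    intro h' z hz
    exact ⟨hz.1.1, hz.2⟩
  have haΩ : a ∈ UH \ K := hStripΩ h ha
  have hbΩ : b ∈ UH \ K := hStripΩ h hb
  obtain ⟨γ₁, hγ₁⟩ := hpc.joinedIn a haΩ w₀ hw₀Ω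
  obtain ⟨γ₂, hγ₂⟩ := hpc.joinedIn b hbΩ w₀ hw₀Ω
  set Γ₁ : Set ℂ := range γ₁ with hΓ₁def
  set Γ₂ : Set ℂ := range γ₂ with hΓ₂def
  have hΓ₁comp : IsCompact Γ₁ := isCompact_range γ₁.continuous
  have hΓ₂comp : IsCompact Γ₂ := isCompact_range γ₂.continuous
  have hΓ₁Ω : Γ₁ ⊆ UH \ K := by rintro _ ⟨t, rfl⟩; exact hγ₁ t
  have hΓ₂Ω : Γ₂ ⊆ UH \ K := by rintro _ ⟨t, rfl⟩; exact hγ₂ t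
  obtain ⟨ε₁, hε₁pos, hε₁⟩ := hΓ₁comp.exists_thickening_subset_open hΩopen hΓ₁Ω
  obtain ⟨ε₂, hε₂pos, hε₂⟩ := hΓ₂comp.exists_thickening_subset_open hΩopen hΓ₂Ω
  refine ⟨min (min 1 ((h₀ - h) / 2)) (min ε₁ ε₂),
    lt_min (lt_min one_pos (by linarith)) (lt_min hε₁pos hε₂pos), ?_⟩
  intro C hC z₁ hz₁ z₂ hz₂ hz₁C hbd₁ hz₂C hbd₂
  obtain ⟨c, hccont, hcinj, hCeq, hCΩ, hc0, hc1⟩ := hC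
  -- basic properties of C
  have hCbd : IsBounded C := by
    have hcomp : IsCompact (c '' Icc 0 1) := isCompact_Icc.image_of_continuousOn hccont
    exact hcomp.isBounded.subset (by rw [hCeq]; exact image_mono Ioo_subset_Icc_self)
  have hCconn : IsPreconnected C := by
    rw [hCeq]
    exact isPreconnected_Ioo.image c (hccont.mono Ioo_subset_Icc_self)
  have hc0cl : c 0 ∈ closure C := by
    have hcl : c '' closure (Ioo (0:ℝ) 1) ⊆ closure (c '' Ioo 0 1) :=
      ContinuousOn.image_closure
        (by rw [closure_Ioo (by norm_num : (0:ℝ) ≠ 1)]; exact hccont)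
    rw [hCeq]
    refine hcl ⟨0, ?_, rfl⟩
    rw [closure_Ioo (by norm_num : (0:ℝ) ≠ 1)]
    exact ⟨le_refl 0, by norm_num⟩
  have hc0Ω : c 0 ∉ UH \ K := by
    have hfr := hc0
    rw [hΩopen.frontier_eq] at hfr
    exact hfr.2
  have hc0im : (c 0).im ≤ M - 1 := by
    rcases not_and_or.mp hc0Ω with him | hK0
    · have : ¬ (0 < (c 0).im) := him
      push_neg at this
      linarith
    · push_neg at hK0
      have := hKim _ hK0
      have h2' : R ≤ max R h₀ := le_max_left _ _
      simp only [hMdef]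
      linarith
  have hdistdiam : ∀ x ∈ C, dist x (c 0) ≤ Metric.diam C := by
    intro x hx
    have := dist_le_diam_of_mem hCbd.closure (subset_closure hx) hc0cl
    rwa [Metric.diam_closure] at this
  -- the meeting lemma
  have hmeet : ∀ (z : ℂ) (A : Set ℂ), z ∈ A → A ⊆ UH \ K → IsPreconnected A →
      ¬ IsBounded A → IsBounded (connectedComponentIn ((UH \ K) \ C) z) →
      (A ∩ C).Nonempty := by
    intro z A hzA hAΩ hAc hAu hbz
    rcases (A ∩ C).eq_empty_or_nonempty with he | hne'
    · exfalso
      have hsub : A ⊆ (UH \ K) \ C := fun y hy =>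
        ⟨hAΩ hy, fun hyC => (eq_empty_iff_forall_notMem.1 he y ⟨hy, hyC⟩)⟩
      exact hAu (hbz.subset (hAc.subset_connectedComponentIn hzA hsub))
    · exact hne'
  -- the escape sets
  set Q₁ : Set ℂ := connectedComponentIn (Strip h1 \ K) a with hQ₁def
  set Q₂ : Set ℂ := connectedComponentIn (Strip h1 \ K) b with hQ₂def
  have haS1 : a ∈ Strip h1 \ K := ⟨⟨ha.1.1, lt_trans ha.1.2 hh1gt⟩, ha.2⟩
  have hbS1 : b ∈ Strip h1 \ K := ⟨⟨hb.1.1, lt_trans hb.1.2 hh1gt⟩, hb.2⟩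
  have haQ₁ : a ∈ Q₁ := mem_connectedComponentIn haS1
  have hbQ₂ : b ∈ Q₂ := mem_connectedComponentIn hbS1
  have hz₁Q₁ : z₁ ∈ Q₁ := hz₁.2 h1 hh1gt
  have hz₂Q₂ : z₂ ∈ Q₂ := hz₂.2 h1 hh1gt
  have hQ₁Ω : Q₁ ⊆ UH \ K := (connectedComponentIn_subset _ _).trans (hStripΩ h1)
  have hQ₂Ω : Q₂ ⊆ UH \ K := (connectedComponentIn_subset _ _).trans (hStripΩ h1)
  have hB₁conn : IsPreconnected (Γ₁ ∪ Top) :=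
    IsPreconnected.union w₀ ⟨1, γ₁.target⟩ hw₀Top (isPreconnected_range γ₁.continuous) hTopconn
  have hB₂conn : IsPreconnected (Γ₂ ∪ Top) :=
    IsPreconnected.union w₀ ⟨1, γ₂.target⟩ hw₀Top (isPreconnected_range γ₂.continuous) hTopconn
  have hA₁conn : IsPreconnected (Q₁ ∪ (Γ₁ ∪ Top)) :=
    IsPreconnected.union a haQ₁ (mem_union_left _ ⟨0, γ₁.source⟩)
      isPreconnected_connectedComponentIn hB₁conn
  have hA₂conn : IsPreconnected (Q₂ ∪ (Γ₂ ∪ Top)) :=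
    IsPreconnected.union b hbQ₂ (mem_union_left _ ⟨0, γ₂.source⟩)
      isPreconnected_connectedComponentIn hB₂conn
  have hA₁Ω : Q₁ ∪ (Γ₁ ∪ Top) ⊆ UH \ K := union_subset hQ₁Ω (union_subset hΓ₁Ω hTopΩ)
  have hA₂Ω : Q₂ ∪ (Γ₂ ∪ Top) ⊆ UH \ K := union_subset hQ₂Ω (union_subset hΓ₂Ω hTopΩ)
  have hA₁unb : ¬ IsBounded (Q₁ ∪ (Γ₁ ∪ Top)) := fun hbdd =>
    hTopunb (hbdd.subset fun x hx => mem_union_right _ (mem_union_right _ hx))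
  have hA₂unb : ¬ IsBounded (Q₂ ∪ (Γ₂ ∪ Top)) := fun hbdd =>
    hTopunb (hbdd.subset fun x hx => mem_union_right _ (mem_union_right _ hx))
  obtain ⟨x₁, hx₁A, hx₁C⟩ :=
    hmeet z₁ _ (mem_union_left _ hz₁Q₁) hA₁Ω hA₁conn hA₁unb hbd₁
  obtain ⟨x₂, hx₂A, hx₂C⟩ :=
    hmeet z₂ _ (mem_union_left _ hz₂Q₂) hA₂Ω hA₂conn hA₂unb hbd₂
  -- case: a point of C lies in Top
  have hTopcase : ∀ x ∈ C, x ∈ Top → min (min 1 ((h₀ - h) / 2)) (min ε₁ ε₂) ≤ Metric.diam C := by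
    intro x hxC hxT
    have hxim : M < x.im := hxT
    have hd : (1:ℝ) ≤ dist x (c 0) := by
      calc (1:ℝ) ≤ x.im - (c 0).im := by linarith
      _ ≤ |(x - c 0).im| := by rw [Complex.sub_im]; exact le_abs_self _
      _ ≤ ‖x - c 0‖ := Complex.abs_im_le_norm _
      _ = dist x (c 0) := (Complex.dist_eq x (c 0)).symm
    calc min (min 1 ((h₀ - h) / 2)) (min ε₁ ε₂) ≤ 1 :=
          le_trans (min_le_left _ _) (min_le_left _ _)
      _ ≤ dist x (c 0) := hd
      _ ≤ Metric.diam C := hdistdiam x hxC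
  -- case: a point of C lies in one of the fixed paths
  have hΓcase : ∀ (Γ : Set ℂ) (ε : ℝ), Metric.thickening ε Γ ⊆ UH \ K →
      ∀ x ∈ C, x ∈ Γ → ε ≤ Metric.diam C := by
    intro Γ ε hthick x hxC hxΓ
    have hd : ε ≤ dist x (c 0) := by
      by_contra hlt
      push_neg at hlt
      apply hc0Ω
      apply hthick
      rw [Metric.mem_thickening_iff]
      exact ⟨x, hxΓ, by rwa [dist_comm]⟩
    exact le_trans hd (hdistdiam x hxC)
  rcases hx₁A with hx₁Q | hx₁B
  swap
  · rcases hx₁B with hx₁Γ | hx₁T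
    · exact le_trans (le_trans (min_le_right _ _) (min_le_left _ _)) (hΓcase Γ₁ ε₁ hε₁ x₁ hx₁C hx₁Γ)
    · exact hTopcase x₁ hx₁C hx₁T
  rcases hx₂A with hx₂Q | hx₂B
  swap
  · rcases hx₂B with hx₂Γ | hx₂T
    · exact le_trans (le_trans (min_le_right _ _) (min_le_right _ _)) (hΓcase Γ₂ ε₂ hε₂ x₂ hx₂C hx₂Γ)
    · exact hTopcase x₂ hx₂C hx₂T
  -- main case: C meets both strip components
  have hstripmono : Strip h1 \ K ⊆ Strip h₀ \ K := by
    intro z hz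
    exact ⟨⟨hz.1.1, lt_trans hz.1.2 hh1lt⟩, hz.2⟩
  have haS0 : a ∈ Strip h₀ \ K := hstripmono haS1
  have hbS0 : b ∈ Strip h₀ \ K := hstripmono hbS1
  have hQ₁sub : Q₁ ⊆ connectedComponentIn (Strip h₀ \ K) a :=
    isPreconnected_connectedComponentIn.subset_connectedComponentIn haQ₁
      ((connectedComponentIn_subset _ _).trans hstripmono)
  have hQ₂sub : Q₂ ⊆ connectedComponentIn (Strip h₀ \ K) b :=
    isPreconnected_connectedComponentIn.subset_connectedComponentIn hbQ₂
      ((connectedComponentIn_subset _ _).trans hstripmono)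
  have hx₁Q0 : x₁ ∈ connectedComponentIn (Strip h₀ \ K) a := hQ₁sub hx₁Q
  have hx₂Q0 : x₂ ∈ connectedComponentIn (Strip h₀ \ K) b := hQ₂sub hx₂Q
  have hnotsub : ¬ C ⊆ Strip h₀ \ K := by
    intro hsub
    have e1 : connectedComponentIn (Strip h₀ \ K) a
        = connectedComponentIn (Strip h₀ \ K) x₁ := connectedComponentIn_eq hx₁Q0
    have hCsub : C ⊆ connectedComponentIn (Strip h₀ \ K) x₁ :=
      hCconn.subset_connectedComponentIn hx₁C hsub
    have hx₂a : x₂ ∈ connectedComponentIn (Strip h₀ \ K) a := by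
      rw [e1]; exact hCsub hx₂C
    have e2 : connectedComponentIn (Strip h₀ \ K) a
        = connectedComponentIn (Strip h₀ \ K) x₂ := connectedComponentIn_eq hx₂a
    have e3 : connectedComponentIn (Strip h₀ \ K) b
        = connectedComponentIn (Strip h₀ \ K) x₂ := connectedComponentIn_eq hx₂Q0
    exact hbQ (by rw [e2, ← e3]; exact mem_connectedComponentIn hbS0)
  obtain ⟨x, hxC, hxout⟩ := not_subset.mp hnotsub
  have hxΩ : x ∈ UH \ K := hCΩ hxC
  have hxim : h₀ ≤ x.im := by
    by_contra hlt
    push_neg at hlt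
    exact hxout ⟨⟨hxΩ.1, hlt⟩, hxΩ.2⟩
  have hx₁im : x₁.im < h1 := ((connectedComponentIn_subset _ _) hx₁Q).1.2
  have hd : (h₀ - h) / 2 ≤ dist x x₁ := by
    calc (h₀ - h) / 2 = h₀ - h1 := by simp only [hh1def]; ring
    _ ≤ x.im - x₁.im := by linarith
    _ ≤ |(x - x₁).im| := by rw [Complex.sub_im]; exact le_abs_self _
    _ ≤ ‖x - x₁‖ := Complex.abs_im_le_norm _
    _ = dist x x₁ := (Complex.dist_eq x x₁).symm
  calc min (min 1 ((h₀ - h) / 2)) (min ε₁ ε₂) ≤ (h₀ - h) / 2 :=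
        le_trans (min_le_left _ _) (min_le_right _ _)
    _ ≤ dist x x₁ := hd
    _ ≤ Metric.diam C := dist_le_diam_of_mem hCbd hxC hx₁C
end
end
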